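/- arXiv:1608.07144 — 2 statements merged into one kernel-verified Lean document; each statement's English description precedes it below -/
import Mathlib

section
/- If p is a free ultrafilter on an infinite set X, then the filter space X_p is not suborderable; that is, X_p does not embed homeomorphically into any linearly ordered topological space. -/
open Set

universe u v w y

/-- The filter space topology on `Option X`: every point `some x` is isolated, and the
neighborhoods of the extra point `none` are the sets `P ∪ {none}` with `P ∈ p`. -/
def filterTop {X : Type u} (p : Filter X) : TopologicalSpace (Option X) where
  IsOpen U := none ∈ U → (Option.some ⁻¹' U) ∈ p
  isOpen_univ := fun _ => by simp
  isOpen_inter := fun U V hU hV h => by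
    rw [Set.preimage_inter]
    exact Filter.inter_mem (hU h.1) (hV h.2)
  isOpen_sUnion := fun S hS h => by
    rw [Set.mem_sUnion] at h
    obtain ⟨U, hUS, hU⟩ := h
    exact Filter.mem_of_superset (hS U hUS hU)
      (Set.preimage_mono (Set.subset_sUnion_of_mem hUS))

/-- A filter is free if `∅ ∉ p` and the intersection of all its members is empty. -/
def IsFree {X : Type u} (p : Filter X) : Prop :=
  (∅ : Set X) ∉ p ∧ ⋂₀ {P : Set X | P ∈ p} = ∅

/-- A family of sets is nested if any two members are comparable under inclusion. -/
def Nested {X : Type u} (F : Set (Set X)) : Prop :=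
  ∀ P ∈ F, ∀ Q ∈ F, P ⊆ Q ∨ Q ⊆ P

/-- The order topology of a linear order: generated by the open rays. -/
def ordTop {Z : Type u} (r : LinearOrder Z) : TopologicalSpace Z :=
  TopologicalSpace.generateFrom
    {S : Set Z | ∃ a : Z, S = {z | r.lt z a} ∨ S = {z | r.lt a z}}

/-- `(Z, t)` is weakly orderable by the linear order `r`: the order topology of `r`
is contained in `t`. -/
def WOBy {Z : Type u} (t : TopologicalSpace Z) (r : LinearOrder Z) : Prop :=
  ∀ S : Set Z, (ordTop r).IsOpen S → t.IsOpen S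

def WeaklyOrderable {Z : Type u} (t : TopologicalSpace Z) : Prop :=
  ∃ r : LinearOrder Z, WOBy t r

/-- Weakly `p`-orderable: weakly orderable by a linear order in which `p` is the maximum. -/
def WeaklyPOrderable {Z : Type u} (t : TopologicalSpace Z) (p : Z) : Prop :=
  ∃ r : LinearOrder Z, WOBy t r ∧ ∀ z : Z, r.le z p

def Orderable {Z : Type u} (t : TopologicalSpace Z) : Prop :=
  ∃ r : LinearOrder Z, ordTop r = t

/-- `p`-orderable: orderable by a linear order in which `p` is the maximum. -/
def POrderable {Z : Type u} (t : TopologicalSpace Z) (p : Z) : Prop :=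
  ∃ r : LinearOrder Z, ordTop r = t ∧ ∀ z : Z, r.le z p

/-- The approaching number of a point `p`: the least cardinality of a set
`A ⊆ Z \ {p}` with `p ∈ closure A`. -/
noncomputable def aNum {Z : Type u} (t : TopologicalSpace Z) (p : Z) : Cardinal.{u} :=
  sInf {c : Cardinal.{u} | ∃ A : Set Z, p ∉ A ∧ p ∈ @closure Z t A ∧ c = Cardinal.mk ↥A}

/-- The pseudo-character of a point `p`: the least cardinality of a family of open sets
whose intersection is `{p}`. -/
noncomputable def psiNum {Z : Type u} (t : TopologicalSpace Z) (p : Z) : Cardinal.{u} :=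
  sInf {c : Cardinal.{u} | ∃ Us : Set (Set Z),
    (∀ V ∈ Us, t.IsOpen V) ∧ ⋂₀ Us = {p} ∧ c = Cardinal.mk ↥Us}

/-- The approaching number of a space: minimum over non-isolated points. -/
noncomputable def aSp {Z : Type u} (t : TopologicalSpace Z) : Cardinal.{u} :=
  sInf {c : Cardinal.{u} | ∃ p : Z, ¬ t.IsOpen ({p} : Set Z) ∧ c = aNum t p}

/-- The pseudo-character of a space: supremum over points. -/
noncomputable def psiSp {Z : Type u} (t : TopologicalSpace Z) : Cardinal.{u} :=
  ⨆ p : Z, psiNum t p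

/-- `‖p‖ = min {|P| : P ∈ p}`. -/
noncomputable def fNorm {X : Type u} (p : Filter X) : Cardinal.{u} :=
  sInf {c : Cardinal.{u} | ∃ P ∈ p, c = Cardinal.mk ↥P}

/-- A selection relation: total and antisymmetric. -/
def SelRel {Z : Type u} (R : Z → Z → Prop) : Prop :=
  (∀ x y : Z, R x y ∨ R y x) ∧ (∀ x y : Z, R x y → R y x → x = y)

/-- Separate continuity of a selection relation: the open rays are open. -/
def SepCont {Z : Type u} (t : TopologicalSpace Z) (R : Z → Z → Prop) : Prop :=
  ∀ x : Z, t.IsOpen {z | R z x ∧ z ≠ x} ∧ t.IsOpen {z | R x z ∧ x ≠ z}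

/-- Continuity of a selection relation (Gutev–Nogura characterization). -/
def ContSel {Z : Type u} (t : TopologicalSpace Z) (R : Z → Z → Prop) : Prop :=
  ∀ x y : Z, R x y → x ≠ y →
    ∃ U V : Set Z, t.IsOpen U ∧ t.IsOpen V ∧ x ∈ U ∧ y ∈ V ∧
      ∀ u ∈ U, ∀ v ∈ V, R u v ∧ u ≠ v

/-- The subspace topology. -/
def subTop {Z : Type u} (t : TopologicalSpace Z) (S : Set Z) : TopologicalSpace ↥S :=
  TopologicalSpace.induced Subtype.val t

/-- The product topology. -/
def prodTop {A : Type u} {B : Type v} (tA : TopologicalSpace A) (tB : TopologicalSpace B) :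
    TopologicalSpace (A × B) :=
  TopologicalSpace.induced Prod.fst tA ⊓ TopologicalSpace.induced Prod.snd tB

/-- `C` is a club (closed unbounded) subset of the ordinal `o`. -/
def Club (o : Ordinal.{u}) (C : Set Ordinal.{u}) : Prop :=
  C ⊆ Set.Iio o ∧ (∀ α < o, ∃ β ∈ C, α ≤ β) ∧
  (∀ α < o, Order.IsSuccLimit α → (∀ β < α, ∃ γ ∈ C, β ≤ γ ∧ γ < α) → α ∈ C)

/-- `S` is a stationary subset of the ordinal `o`. -/
def StationaryIn (o : Ordinal.{u}) (S : Set Ordinal.{u}) : Prop :=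
  S ⊆ Set.Iio o ∧ ∀ C : Set Ordinal.{u}, Club o C → (S ∩ C).Nonempty

/-!
An embedding `f` of `X_p` into a linear order sends `p` to a point `y` that lies in the closure of
`S = f(X)` but not in `S`. On one side of `y`, say below it, `S` approaches `y` along a linear order
without maximum, and every such order splits into two disjoint cofinal parts (colour a cofinal
well-ordered subset by the parity of successor steps). Both parts accumulate at `y`, so both
preimages accumulate at `p`, that is, both belong to the ultrafilter `p`; but they are disjoint.
-/

open Topology Filter

section Cofinal

variable {α : Type*} [LinearOrder α]

-- `false` at minima and limits, alternating along successors.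
noncomputable def succParity [WellFoundedLT α] (a : α) : Bool :=
  letI := SuccOrder.ofLinearWellFoundedLT α
  SuccOrder.prelimitRecOn a (fun _ _ b => !b) (fun _ _ _ => false)

theorem exists_isCofinal_and_isCofinal_compl_of_wellFoundedLT [WellFoundedLT α] [NoMaxOrder α] :
    ∃ D : Set α, IsCofinal D ∧ IsCofinal Dᶜ := by
  let := SuccOrder.ofLinearWellFoundedLT α
  have hsucc (a : α) : succParity (Order.succ a) = !succParity a :=
    SuccOrder.prelimitRecOn_succ _ _ a
  have hcof (c : Bool) : IsCofinal {a : α | succParity a = c} := by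
    intro a
    by_cases ha : succParity a = c
    · exact ⟨a, ha, le_rfl⟩
    · exact ⟨Order.succ a, by simpa [hsucc, Bool.eq_not_iff] using ha, Order.le_succ a⟩
  refine ⟨{a | succParity a = true}, hcof true, ?_⟩
  simpa [compl_ofPred] using hcof false

theorem exists_isCofinal_and_isCofinal_compl [NoMaxOrder α] :
    ∃ D : Set α, IsCofinal D ∧ IsCofinal Dᶜ := by
  -- The records of a well-ordering form a cofinal subset on which `<` is well-founded.
  set W : Set α := {a | ∀ b, WellOrderingRel b a → b < a}
  have hW : IsCofinal W := isCofinal_setOfPred_imp_lt WellOrderingRel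
  have : WellFoundedLT W := by
    refine ⟨Subrelation.wf (fun {v w} hvw => ?_)
      (InvImage.wf Subtype.val (IsWellFounded.wf (r := WellOrderingRel)))⟩
    rcases trichotomous_of WellOrderingRel (v : α) w with h | h | h
    · exact h
    · exact absurd (Subtype.ext h) hvw.ne
    · exact absurd (v.2 _ h) (lt_asymm hvw)
  have : NoMaxOrder W := ⟨fun w => by
    obtain ⟨b, hb⟩ := exists_gt (w : α)
    obtain ⟨w', hw', hbw'⟩ := hW b
    exact ⟨⟨w', hw'⟩, hb.trans_le hbw'⟩⟩
  obtain ⟨E, hE, hEc⟩ := exists_isCofinal_and_isCofinal_compl_of_wellFoundedLT (α := W)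
  refine ⟨Subtype.val '' E, hW.trans hE, (hW.trans hEc).mono ?_⟩
  rintro _ ⟨w, hw, rfl⟩ ⟨w', hw', hww'⟩
  exact hw (Subtype.ext hww' ▸ hw')

end Cofinal

theorem ordTop_eq_preorder_topology {Y : Type*} [r : LinearOrder Y] :
    ordTop r = Preorder.topology Y := by
  unfold ordTop Preorder.topology
  congr 1
  ext S
  simp only [mem_ofPred_eq]
  exact exists_congr fun a => or_comm

section OrderTopology

variable {Y : Type*} [LinearOrder Y] [TopologicalSpace Y] [OrderTopology Y]

theorem mem_closure_of_forall_exists_ge {S E : Set Y} {y : Y} (hS : S ⊆ Iio y)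
    (hy : y ∈ closure S) (hES : E ⊆ S) (hE : ∀ s ∈ S, ∃ e ∈ E, s ≤ e) :
    y ∈ closure E := by
  have hlub : IsLUB S y := isLUB_of_mem_closure (fun s hs => (hS hs).le) hy
  obtain ⟨s, hs⟩ := closure_nonempty_iff.1 ⟨y, hy⟩
  obtain ⟨e, he, -⟩ := hE s hs
  refine IsLUB.mem_closure
    ⟨fun e he => hlub.1 (hES he), fun b hb => hlub.2 fun s hs => ?_⟩ ⟨e, he⟩
  obtain ⟨e, he, hse⟩ := hE s hs
  exact hse.trans (hb he)

theorem exists_mem_closure_inter_and_mem_closure_diff_of_subset_Iio {S : Set Y} {y : Y}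
    (hS : S ⊆ Iio y) (hy : y ∈ closure S) :
    ∃ D : Set Y, y ∈ closure (S ∩ D) ∧ y ∈ closure (S \ D) := by
  have : NoMaxOrder S := ⟨fun s => by
    obtain ⟨t, hst, htS⟩ := mem_closure_iff.1 hy (Ioi s) isOpen_Ioi (hS s.2)
    exact ⟨⟨t, htS⟩, hst⟩⟩
  have hcof {E : Set S} (hE : IsCofinal E) : y ∈ closure (Subtype.val '' E) :=
    mem_closure_of_forall_exists_ge hS hy (Subtype.coe_image_subset _ _) fun s hs => by
      obtain ⟨e, he, hse⟩ := hE ⟨s, hs⟩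
      exact ⟨e, mem_image_of_mem _ he, hse⟩
  obtain ⟨E, hE, hEc⟩ := exists_isCofinal_and_isCofinal_compl (α := S)
  refine ⟨Subtype.val '' E, ?_, ?_⟩
  · simpa using hcof hE
  · simpa [image_compl_eq_range_sdiff_image Subtype.val_injective] using hcof hEc

theorem exists_mem_closure_inter_and_mem_closure_diff {S : Set Y} {y : Y} (hyS : y ∉ S)
    (hy : y ∈ closure S) : ∃ D : Set Y, y ∈ closure (S ∩ D) ∧ y ∈ closure (S \ D) := by
  rw [← inter_eq_left.2 (subset_compl_singleton_iff.2 hyS), ← Iio_union_Ioi,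
    inter_union_distrib_left, closure_union] at hy
  obtain ⟨T, hTS, D, hD, hD'⟩ :
      ∃ T ⊆ S, ∃ D : Set Y, y ∈ closure (T ∩ D) ∧ y ∈ closure (T \ D) := by
    rcases hy with hy | hy
    · exact ⟨_, inter_subset_left,
        exists_mem_closure_inter_and_mem_closure_diff_of_subset_Iio inter_subset_right hy⟩
    · exact ⟨_, inter_subset_left,
        exists_mem_closure_inter_and_mem_closure_diff_of_subset_Iio (Y := Yᵒᵈ)
          (S := OrderDual.ofDual ⁻¹' (S ∩ Ioi y)) (fun _ hz => hz.2) hy⟩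
  exact ⟨D, closure_mono (inter_subset_inter_left D hTS) hD,
    closure_mono (sdiff_subset_sdiff_left hTS) hD'⟩

end OrderTopology

section FilterSpace

variable {X : Type*}

theorem none_mem_closure_range_some (p : Filter X) [p.NeBot] :
    none ∈ @closure _ (filterTop p) (range some) := by
  let := filterTop p
  refine mem_closure_iff.2 fun U hU hnone => ?_
  obtain ⟨x, hx⟩ := p.nonempty_of_mem (hU hnone)
  exact ⟨some x, hx, x, rfl⟩

theorem preimage_some_mem_of_none_mem_closure (p : Ultrafilter X) {A : Set (Option X)}
    (hA : none ∉ A) (h : none ∈ @closure _ (filterTop (p : Filter X)) A) :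
    some ⁻¹' A ∈ p := by
  let := filterTop (p : Filter X)
  by_contra hnot
  obtain ⟨a, ⟨ha | ha, haA⟩⟩ := mem_closure_iff.1 h (insert none Aᶜ)
    (fun _ => mem_of_superset (Ultrafilter.compl_mem_iff_notMem.2 hnot) fun _ => Or.inr)
    (mem_insert _ _)
  · exact hA (ha ▸ haA)
  · exact ha haA

end FilterSpace

theorem stmt5_general {X : Type u} (p : Ultrafilter X) :
    ¬ ∃ (Y : Type v) (r : LinearOrder Y) (f : Option X → Y),
        Function.Injective f ∧
        filterTop (p : Filter X) = TopologicalSpace.induced f (ordTop r) := by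
  rintro ⟨Y, r, f, hinj, htop⟩
  let := filterTop (p : Filter X)
  let := Preorder.topology Y
  have : OrderTopology Y := ⟨rfl⟩
  have hf : Topology.IsInducing f := ⟨htop.trans (by rw [ordTop_eq_preorder_topology])⟩
  set S := range (f ∘ some)
  have hyS : f none ∉ S := fun ⟨x, hx⟩ => Option.some_ne_none x (hinj hx)
  have hy : f none ∈ closure S := by
    have := hf.closure_eq_preimage_closure_image _ ▸ none_mem_closure_range_some (p : Filter X)
    rwa [← range_comp] at this
  obtain ⟨D, hD, hD'⟩ := exists_mem_closure_inter_and_mem_closure_diff hyS hy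
  have pull {T : Set Y} (hTS : T ⊆ S) (hT : f none ∈ closure T) :
      {x | f (some x) ∈ T} ∈ p := by
    refine preimage_some_mem_of_none_mem_closure p (A := f ⁻¹' T) (fun h => hyS (hTS h)) ?_
    rw [hf.closure_eq_preimage_closure_image, image_preimage_eq_of_subset
      (hTS.trans (range_comp_subset_range _ _))]
    exact hT
  exact p.empty_notMem (Filter.mem_of_superset
    (Filter.inter_mem (pull inter_subset_left hD) (pull sdiff_subset hD'))
    fun _ ⟨hxD, hxD'⟩ => hxD'.2 hxD.2)

/-- If `p` is a free ultrafilter on an infinite set `X`, then the filter space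
`X_p` is not suborderable: it does not embed homeomorphically into any linearly ordered
topological space. -/
theorem stmt5 {X : Type u} [Infinite X] (p : Ultrafilter X)
    (hfree : IsFree (p : Filter X)) :
    ¬ ∃ (Y : Type v) (r : LinearOrder Y) (f : Option X → Y),
        Function.Injective f ∧
        filterTop (p : Filter X) = TopologicalSpace.induced f (ordTop r) :=
  stmt5_general p
end

section
/- Let κ, λ and μ be infinite cardinals such that λ is regular and κ ≤ λ ≤ μ. Then there exist a set Z with |Z| = μ and a free filter p on Z such that the filter space Z_p is weakly orderable, a(Z_p) = κ and ψ(Z_p) = λ. If, moreover, κ is regular, then p can be chosen so that Z_p is orderable. -/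
open Set

universe u v w y

/-!
Take `Z = (κ ×ₗ μ ×ₗ ℤ) ⊕ (λ ×ₗ ℤ)`, with `κ, μ, λ` read as initial ordinals, and let `P ∈ p` iff
`P` contains a final segment of `λ ×ₗ ℤ` and contains `{k} × μ × ℤ` for all but `< κ` many `k < κ`.
A set of size `< κ` has small projection to `κ` and is bounded in `λ ×ₗ ℤ` (as `κ ≤ λ = cf λ`), so
its complement lies in `p`, while `κ × {e}` meets every member of `p`: `a(Z_p) = κ`. Fewer than
`λ` members of `p` share a final segment of `λ ×ₗ ℤ`, while `κ + λ` members already have empty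
intersection: `ψ(Z_p) = λ`. Ordering `Z_p` as `κ ×ₗ μ ×ₗ ℤ < p < (λ ×ₗ ℤ)ᵒᵈ`, every order
neighbourhood of `p` belongs to `p`, so `Z_p` is weakly orderable. For regular `κ`, the sets with
complement of size `< κ` are exactly the tails of `κ`, so `p` is the trace of the order
neighbourhoods of `p`; the `ℤ` factors make all other points isolated, so `Z_p` is orderable.
-/

open Filter Cardinal Sum

section FilterSpace

variable {X : Type u} {p : Filter X}

theorem none_mem_closure_filterTop_iff {A : Set (Option X)} (hA : none ∉ A) :
    none ∈ @closure _ (filterTop p) A ↔ (Option.some ⁻¹' A)ᶜ ∉ p := by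
  rw [@mem_closure_iff _ (filterTop p)]
  refine ⟨fun h hc => ?_, fun h U hU hnU => ?_⟩
  · obtain ⟨w, hwU, hwA⟩ := h Aᶜ (fun _ => hc) hA
    exact hwU hwA
  · obtain ⟨z, hzU, hzA⟩ := not_subset.1 fun hsub => h (mem_of_superset (hU hnU) hsub)
    exact ⟨some z, hzU, not_not.1 hzA⟩

theorem isFree_of_le_cofinite [p.NeBot] (h : p ≤ cofinite) : IsFree p := by
  refine ⟨empty_notMem p, eq_empty_of_forall_notMem fun x hx => ?_⟩
  exact hx _ (le_cofinite_iff_compl_singleton_mem.1 h x) rfl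

theorem aNum_filterTop_none_eq {c : Cardinal.{u}} (hex : ∃ B : Set X, Bᶜ ∉ p ∧ #B ≤ c)
    (hmin : ∀ B : Set X, #B < c → Bᶜ ∈ p) : aNum (filterTop p) none = c := by
  obtain ⟨B, hBp, hBc⟩ := hex
  have hB : none ∈ @closure _ (filterTop p) (Option.some '' B) := by
    rwa [none_mem_closure_filterTop_iff (by simp),
      Set.preimage_image_eq _ (Option.some_injective X)]
  rw [aNum]
  apply le_antisymm
  · refine (csInf_le' ?_).trans ((mk_image_eq (Option.some_injective X)).trans_le hBc)
    exact ⟨_, by simp, hB, rfl⟩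
  · refine le_csInf ⟨_, _, by simp, hB, rfl⟩ ?_
    rintro _ ⟨A, hA, hAcl, rfl⟩
    by_contra! hlt
    exact (none_mem_closure_filterTop_iff hA).1 hAcl
      (hmin _ ((mk_preimage_of_injective _ _ (Option.some_injective X)).trans_lt hlt))

theorem psiNum_filterTop_none_eq {c : Cardinal.{u}}
    (hex : ∃ F : Set (Set X), (∀ P ∈ F, P ∈ p) ∧ ⋂₀ F = ∅ ∧ #F ≤ c)
    (hmin : ∀ F : Set (Set X), (∀ P ∈ F, P ∈ p) → #F < c → (⋂₀ F).Nonempty) :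
    psiNum (filterTop p) none = c := by
  obtain ⟨Us, hUs, hUsinter, hUsc⟩ : ∃ Us : Set (Set (Option X)),
      (∀ V ∈ Us, (filterTop p).IsOpen V) ∧ ⋂₀ Us = {none} ∧ #Us ≤ c := by
    obtain ⟨F, hFp, hF, hFc⟩ := hex
    refine ⟨(fun P => insert none (Option.some '' P)) '' F, ?_, ?_, mk_image_le.trans hFc⟩
    · rintro _ ⟨P, hP, rfl⟩ -
      convert hFp P hP using 1
      ext; simp
    · ext (_ | z)
      · simp
      · simpa using fun h => (Set.eq_empty_iff_forall_notMem.1 hF z) h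
  rw [psiNum]
  apply le_antisymm
  · exact (csInf_le' (by exact ⟨Us, hUs, hUsinter, rfl⟩)).trans hUsc
  · refine le_csInf ⟨_, Us, hUs, hUsinter, rfl⟩ ?_
    rintro _ ⟨Vs, hVs, hinter, rfl⟩
    by_contra! hlt
    have hnone : ∀ V ∈ Vs, none ∈ V := fun V hV => (hinter.symm ▸ rfl : none ∈ ⋂₀ Vs) V hV
    obtain ⟨z, hz⟩ := hmin ((Option.some ⁻¹' ·) '' Vs)
      (by rintro _ ⟨V, hV, rfl⟩; exact hVs V hV (hnone V hV)) (mk_image_le.trans_lt hlt)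
    have : some z ∈ ⋂₀ Vs := fun V hV => hz _ ⟨V, hV, rfl⟩
    simp [hinter] at this

end FilterSpace

theorem exists_gt_of_mk_lt_cof {β : Type u} [LinearOrder β] {s : Set β} (hs : #s < Order.cof β) :
    ∃ x, ∀ y ∈ s, y < x :=
  not_isCofinal_iff.1 fun h => (Order.cof_le h).not_gt hs

theorem compl_mem_atTop_of_mk_lt_cof {β : Type u} [LinearOrder β] {s : Set β}
    (hs : #s < Order.cof β) : sᶜ ∈ atTop := by
  obtain ⟨x, hx⟩ := exists_gt_of_mk_lt_cof hs
  exact mem_of_superset (Ici_mem_atTop x) fun y hxy hy => (hx y hy).not_ge hxy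

theorem sInter_mem_atTop_of_mk_lt_cof {β : Type u} [LinearOrder β] {F : Set (Set β)}
    (hF : #F < Order.cof β) (h : ∀ s ∈ F, s ∈ atTop) : ⋂₀ F ∈ atTop := by
  have : Nonempty β := Order.cof_ne_zero_iff.1 (zero_le.trans_lt hF).ne'
  choose! g hg using fun s hs => mem_atTop_sets.1 (h s hs)
  obtain ⟨x, hx⟩ := exists_gt_of_mk_lt_cof (mk_image_le.trans_lt hF : #(g '' F) < _)
  exact mem_of_superset (Ici_mem_atTop x) fun y hxy s hs =>
    hg s hs y ((hx _ (mem_image_of_mem g hs)).le.trans hxy)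

theorem Prod.Lex.lift_cof_le_cof {α : Type u} {β : Type v} [Preorder α] [Preorder β]
    [Nonempty β] : lift.{v} (Order.cof α) ≤ lift.{u} (Order.cof (α ×ₗ β)) := by
  refine Order.le_lift_cof_iff.2 fun s hs =>
    (lift_le.2 (Order.cof_le (s := (fun x => (ofLex x).1) '' s) ?_)).trans
      (by rw [← lift_umax.{u, v}]; exact mk_image_le_lift)
  refine hs.image Prod.Lex.monotone_fst_ofLex fun a => ?_
  exact ⟨a, ⟨toLex (a, Classical.arbitrary β), rfl⟩, le_rfl⟩

theorem Prod.Lex.comap_fst_atTop_le {α β : Type u} [Preorder α] [Preorder β] [NoMaxOrder α] :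
    comap (fun x : α ×ₗ β => (ofLex x).1) atTop ≤ atTop :=
  le_iInf fun x => le_principal_iff.2 <| mem_comap.2
    ⟨Ioi (ofLex x).1, Ioi_mem_atTop _, fun _ hy => Prod.Lex.le_iff.2 (Or.inl hy)⟩

theorem Prod.Lex.comap_fst_atTop {α β : Type u} [Preorder α] [Preorder β] [NoMaxOrder α]
    [Nonempty β] : comap (fun x : α ×ₗ β => (ofLex x).1) atTop = atTop :=
  le_antisymm comap_fst_atTop_le
    (monotone_fst_ofLex.tendsto_atTop_atTop fun a =>
      ⟨toLex (a, Classical.arbitrary β), le_rfl⟩).le_comap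

namespace Filter

variable (X : Type u) {c : Cardinal.{u}}

/-- Unlike `Filter.cocardinal`, `c` need not be regular: only finite intersections occur. -/
def coSmall (hc : ℵ₀ ≤ c) : Filter X :=
  comk (fun s => #s < c) (by simpa using aleph0_pos.trans_le hc)
    (fun _ ht _ hs => (mk_le_mk_of_subset hs).trans_lt ht)
    (fun _ hs _ ht => (mk_union_le _ _).trans_lt (add_lt_of_lt hc hs ht))

variable {X} {hc : ℵ₀ ≤ c}

theorem compl_mem_coSmall {s : Set X} : sᶜ ∈ coSmall X hc ↔ #s < c := compl_mem_comk

theorem coSmall_neBot (h : c ≤ #X) : NeBot (coSmall X hc) := by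
  rw [neBot_iff, Ne, ← empty_mem_iff_bot, ← compl_univ, compl_mem_coSmall, mk_univ, not_lt]
  exact h

theorem coSmall_le_atTop : coSmall c.ord.ToType hc ≤ atTop :=
  le_iInf fun k => le_principal_iff.2 <| by
    rw [← compl_Iio, compl_mem_coSmall]
    simpa using Cardinal.mk_Iio_lt k

theorem atTop_le_coSmall (hreg : c.ord.cof = c) : atTop ≤ coSmall c.ord.ToType hc := by
  intro s hs
  rw [← compl_compl s] at hs ⊢
  rw [compl_mem_coSmall] at hs
  exact compl_mem_atTop_of_mk_lt_cof (by rwa [Ordinal.cof_toType, hreg])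

end Filter

theorem ordTop_eq_preorderTopology {Z : Type u} (r : LinearOrder Z) :
    ordTop r = @Preorder.topology Z r.toPreorder := by
  unfold ordTop Preorder.topology
  congr 1
  ext S
  exact exists_congr fun _ => or_comm

def HasCovers (α : Type*) [Preorder α] : Prop :=
  ∀ a : α, ∃ a₁ a₂, a₁ ⋖ a ∧ a ⋖ a₂

theorem Int.hasCovers : HasCovers ℤ :=
  fun n => ⟨n - 1, n + 1, Order.sub_one_covBy n, Order.covBy_add_one n⟩

theorem HasCovers.lex_prod {α β : Type*} [Preorder α] [Preorder β] (h : HasCovers β) :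
    HasCovers (α ×ₗ β) := by
  intro x
  obtain ⟨b₁, b₂, h₁, h₂⟩ := h (ofLex x).2
  exact ⟨toLex ((ofLex x).1, b₁), toLex ((ofLex x).1, b₂),
    Prod.Lex.covBy_iff.2 (Or.inl ⟨rfl, h₁⟩), Prod.Lex.covBy_iff.2 (Or.inl ⟨rfl, h₂⟩)⟩

/-- `Option (α ⊕ β)` ordered as `α < none < βᵒᵈ`; reversing `β` lets both summands approach
`none` along `atTop`. -/
def MidSum (α β : Type u) : Type u := Option (α ⊕ β)

namespace MidSum

variable {α β : Type u}

def mid : MidSum α β := none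
def left (a : α) : MidSum α β := some (inl a)
def right (b : β) : MidSum α β := some (inr b)

theorem mid_or_left_or_right (x : MidSum α β) :
    x = mid ∨ (∃ a, left a = x) ∨ ∃ b, right b = x := by
  rcases x with _ | a | b
  exacts [Or.inl rfl, Or.inr (Or.inl ⟨a, rfl⟩), Or.inr (Or.inr ⟨b, rfl⟩)]

def toLexSum : MidSum α β → WithTop α ⊕ₗ βᵒᵈ
  | none => Sum.inlₗ ⊤
  | some (inl a) => Sum.inlₗ a
  | some (inr b) => Sum.inrₗ (OrderDual.toDual b)

theorem toLexSum_injective : Function.Injective (toLexSum : MidSum α β → _) := by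
  rintro (_ | _ | _) (_ | _ | _) h <;> simp_all [toLexSum] <;> rfl

@[simp] theorem left_inj {a a' : α} : (left a : MidSum α β) = left a' ↔ a = a' :=
  (Option.some_injective _).eq_iff.trans inl_injective.eq_iff
@[simp] theorem right_inj {b b' : β} : (right b : MidSum α β) = right b' ↔ b = b' :=
  (Option.some_injective _).eq_iff.trans inr_injective.eq_iff
@[simp] theorem left_ne_mid {a : α} : (left a : MidSum α β) ≠ mid := Option.some_ne_none _
@[simp] theorem right_ne_mid {b : β} : (right b : MidSum α β) ≠ mid := Option.some_ne_none _
@[simp] theorem left_ne_right {a : α} {b : β} : (left a : MidSum α β) ≠ right b :=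
  fun h => inl_ne_inr (Option.some_injective _ h)
@[simp] theorem right_ne_left {a : α} {b : β} : (right b : MidSum α β) ≠ left a :=
  fun h => inr_ne_inl (Option.some_injective _ h)

theorem preimage_some_mem_sup_iff {f : Filter α} {g : Filter β} {U : Set (MidSum α β)} :
    Option.some ⁻¹' U ∈ map inl f ⊔ map inr g ↔ left ⁻¹' U ∈ f ∧ right ⁻¹' U ∈ g :=
  Iff.rfl

variable [LinearOrder α] [LinearOrder β]

instance instLinearOrder : LinearOrder (MidSum α β) :=
  LinearOrder.lift' toLexSum toLexSum_injective

theorem lt_iff_toLexSum_lt {x y : MidSum α β} : x < y ↔ toLexSum x < toLexSum y := Iff.rfl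

variable {a a' : α} {b b' : β}

@[simp] theorem left_lt_left : (left a : MidSum α β) < left a' ↔ a < a' := by
  rw [lt_iff_toLexSum_lt]; simp [toLexSum, left]
@[simp] theorem right_lt_right : (right b : MidSum α β) < right b' ↔ b' < b := by
  rw [lt_iff_toLexSum_lt]; simp [toLexSum, right]
@[simp] theorem left_lt_mid : (left a : MidSum α β) < mid := by
  rw [lt_iff_toLexSum_lt]; simp [toLexSum, left, mid]
@[simp] theorem mid_lt_right : (mid : MidSum α β) < right b := by
  rw [lt_iff_toLexSum_lt]; simp [toLexSum, right, mid]
@[simp] theorem left_lt_right : (left a : MidSum α β) < right b := by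
  rw [lt_iff_toLexSum_lt]; simp [toLexSum, left, right]
@[simp] theorem not_mid_lt_left : ¬ (mid : MidSum α β) < left a := by
  rw [lt_iff_toLexSum_lt]; simp [toLexSum, left, mid]
@[simp] theorem not_right_lt_mid : ¬ (right b : MidSum α β) < mid := by
  rw [lt_iff_toLexSum_lt]; simp [toLexSum, right, mid]
@[simp] theorem not_right_lt_left : ¬ (right b : MidSum α β) < left a := by
  rw [lt_iff_toLexSum_lt]; simp [toLexSum, left, right]

theorem lt_mid_iff {x : MidSum α β} : x < mid ↔ ∃ a, left a = x := by
  obtain rfl | ⟨a, rfl⟩ | ⟨b, rfl⟩ := mid_or_left_or_right x <;> simp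

theorem mid_lt_iff {x : MidSum α β} : mid < x ↔ ∃ b, right b = x := by
  obtain rfl | ⟨a, rfl⟩ | ⟨b, rfl⟩ := mid_or_left_or_right x <;> simp

theorem Ioo_left_left (a₁ a₂ : α) :
    Ioo (left a₁ : MidSum α β) (left a₂) = left '' Ioo a₁ a₂ := by
  ext x
  obtain rfl | ⟨a, rfl⟩ | ⟨b, rfl⟩ := mid_or_left_or_right x <;> simp

theorem Ioo_right_right (b₁ b₂ : β) :
    Ioo (right b₂ : MidSum α β) (right b₁) = right '' Ioo b₁ b₂ := by
  ext x
  obtain rfl | ⟨a, rfl⟩ | ⟨b, rfl⟩ := mid_or_left_or_right x <;> simp [and_comm]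

theorem woBy_filterTop [NoMaxOrder α] [NoMaxOrder β] {p : Filter (α ⊕ β)}
    (hp : p ≤ map inl atTop ⊔ map inr atTop) :
    WOBy (Z := MidSum α β) (filterTop p) inferInstance := by
  have : filterTop p ≤ Preorder.topology (MidSum α β) := by
    refine le_generateFrom ?_
    rintro _ ⟨x, rfl | rfl⟩ hmid
    · obtain ⟨a, rfl⟩ := lt_mid_iff.1 hmid
      refine hp (preimage_some_mem_sup_iff.2 ⟨?_, ?_⟩)
      · convert Ioi_mem_atTop a using 1; ext; simp
      · convert univ_mem using 1; ext; simp
    · obtain ⟨b, rfl⟩ := mid_lt_iff.1 hmid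
      refine hp (preimage_some_mem_sup_iff.2 ⟨?_, ?_⟩)
      · convert univ_mem using 1; ext; simp
      · convert Ioi_mem_atTop b using 1; ext; simp
  intro S hS
  rw [ordTop_eq_preorderTopology] at hS
  exact this S hS

theorem ordTop_eq_filterTop [Nonempty α] [Nonempty β] [NoMaxOrder α] [NoMaxOrder β]
    (hα : HasCovers α) (hβ : HasCovers β) :
    ordTop (Z := MidSum α β) inferInstance = filterTop (map inl atTop ⊔ map inr atTop) := by
  let _ : TopologicalSpace (MidSum α β) := Preorder.topology _
  have : OrderTopology (MidSum α β) := ⟨rfl⟩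
  have hleft (a : α) : IsOpen {(left a : MidSum α β)} := by
    obtain ⟨a₁, a₂, h₁, h₂⟩ := hα a
    rw [← image_singleton, ← Set.Ioo_eq_singleton_iff.2 ⟨h₁, h₂⟩, ← Ioo_left_left]
    exact isOpen_Ioo
  have hright (b : β) : IsOpen {(right b : MidSum α β)} := by
    obtain ⟨b₁, b₂, h₁, h₂⟩ := hβ b
    rw [← image_singleton, ← Set.Ioo_eq_singleton_iff.2 ⟨h₁, h₂⟩, ← Ioo_right_right]
    exact isOpen_Ioo
  refine le_antisymm (fun U hU => ?_) (fun S hS => woBy_filterTop le_rfl S hS)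
  rw [ordTop_eq_preorderTopology]
  refine isOpen_iff_mem_nhds.2 fun x hx => ?_
  obtain rfl | ⟨a, rfl⟩ | ⟨b, rfl⟩ := mid_or_left_or_right x
  · obtain ⟨hl, hr⟩ := preimage_some_mem_sup_iff.1 (hU hx)
    obtain ⟨a, ha⟩ := mem_atTop_sets.1 hl
    obtain ⟨b, hb⟩ := mem_atTop_sets.1 hr
    refine mem_of_superset (Ioo_mem_nhds (left_lt_mid (a := a)) (mid_lt_right (b := b))) ?_
    rintro y ⟨hay, hyb⟩
    obtain rfl | ⟨a', rfl⟩ | ⟨b', rfl⟩ := mid_or_left_or_right y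
    · exact hx
    · exact ha a' (left_lt_left.1 hay).le
    · exact hb b' (right_lt_right.1 hyb).le
  · exact mem_of_superset ((hleft a).mem_nhds rfl) (singleton_subset_iff.2 hx)
  · exact mem_of_superset ((hright b).mem_nhds rfl) (singleton_subset_iff.2 hx)

end MidSum

namespace FilterSpaceExample

abbrev LeftSide (κ μ : Cardinal.{u}) : Type u := κ.ord.ToType ×ₗ (μ.ord.ToType ×ₗ ℤ)

abbrev RightSide (lam : Cardinal.{u}) : Type u := lam.ord.ToType ×ₗ ℤ

noncomputable def sumFilter (κ lam μ : Cardinal.{u}) (hκ : ℵ₀ ≤ κ) :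
    Filter (LeftSide κ μ ⊕ RightSide lam) :=
  map inl (comap (fun x => (ofLex x).1) (coSmall _ hκ)) ⊔ map inr atTop

variable {κ lam μ : Cardinal.{u}}

theorem mk_rightSide (hlam : ℵ₀ ≤ lam) : #(RightSide lam) = lam := by
  change #(lam.ord.ToType × ℤ) = lam
  simp [mk_prod, hlam]

theorem mk_leftSide_sum_rightSide (hκ : ℵ₀ ≤ κ) (hμ : ℵ₀ ≤ μ) (h1 : κ ≤ lam) (h2 : lam ≤ μ) :
    #(LeftSide κ μ ⊕ RightSide lam) = μ := by
  rw [mk_sum, lift_id, lift_id, mk_rightSide (hκ.trans h1)]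
  change #(κ.ord.ToType × μ.ord.ToType × ℤ) + lam = μ
  simp only [mk_prod, lift_id, lift_uzero, mk_ord_toType, mk_int, lift_aleph0]
  rw [mul_aleph0_eq hμ, mul_eq_right hμ (h1.trans h2) (aleph0_pos.trans_le hκ).ne',
    add_eq_left hμ h2]

theorem le_cof_rightSide (hreg : lam.ord.cof = lam) : lam ≤ Order.cof (RightSide lam) := by
  simpa [hreg] using Prod.Lex.lift_cof_le_cof (α := lam.ord.ToType) (β := ℤ)

theorem sumFilter_le (hκ : ℵ₀ ≤ κ) : sumFilter κ lam μ hκ ≤ map inl atTop ⊔ map inr atTop := by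
  have := Cardinal.noMaxOrder hκ
  exact sup_le_sup (map_mono ((comap_mono coSmall_le_atTop).trans Prod.Lex.comap_fst_atTop_le))
    le_rfl

theorem sumFilter_eq_of_isRegular (hκ : ℵ₀ ≤ κ) (hμ : ℵ₀ ≤ μ) (hκreg : κ.ord.cof = κ) :
    sumFilter κ lam μ hκ = map inl atTop ⊔ map inr atTop := by
  have := Cardinal.noMaxOrder hκ
  have := nonempty_ord_toType (aleph0_pos.trans_le hμ).ne'
  rw [sumFilter, le_antisymm coSmall_le_atTop (atTop_le_coSmall hκreg), Prod.Lex.comap_fst_atTop]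

theorem isFree_sumFilter (hκ : ℵ₀ ≤ κ) (hlam : ℵ₀ ≤ lam) : IsFree (sumFilter κ lam μ hκ) := by
  have := nonempty_ord_toType (aleph0_pos.trans_le hlam).ne'
  have : (sumFilter κ lam μ hκ).NeBot := sup_neBot.2 (Or.inr inferInstance)
  refine isFree_of_le_cofinite (sup_le ?_ (map_le_iff_le_comap.2 ?_))
  · refine map_le_iff_le_comap.2 ?_
    rw [inl_injective.comap_cofinite_eq]
    refine le_cofinite_iff_compl_singleton_mem.2 fun x => mem_comap.2 ⟨{(ofLex x).1}ᶜ, ?_, ?_⟩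
    · simpa [compl_mem_coSmall] using one_lt_aleph0.trans_le hκ
    · rintro y hy rfl
      exact hy rfl
  · rw [inr_injective.comap_cofinite_eq]
    exact atTop_le_cofinite

theorem aNum_sumFilter (hκ : ℵ₀ ≤ κ) (hμ : ℵ₀ ≤ μ) (hreg : lam.ord.cof = lam) (h1 : κ ≤ lam) :
    aNum (filterTop (sumFilter κ lam μ hκ)) none = κ := by
  have := nonempty_ord_toType (aleph0_pos.trans_le hμ).ne'
  obtain ⟨e⟩ : Nonempty (μ.ord.ToType ×ₗ ℤ) := inferInstance
  refine aNum_filterTop_none_eq ⟨range fun k => inl (toLex (k, e)), fun hmem => ?_, ?_⟩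
    fun B hB => mem_sup.2 ⟨mem_map.2 (mem_comap_iff_compl.2 ?_), mem_map.2 ?_⟩
  · obtain ⟨t, ht, hsub⟩ := mem_comap.1 (mem_sup.1 hmem).1
    obtain ⟨k, hk⟩ := (coSmall_neBot (by simp)).nonempty_of_mem ht
    exact hsub (show (ofLex (toLex (k, e))).1 ∈ t from hk) ⟨k, rfl⟩
  · simpa using mk_range_le
      (f := fun k : κ.ord.ToType => (inl (toLex (k, e)) : LeftSide κ μ ⊕ RightSide lam))
  · rw [preimage_compl, compl_compl, compl_mem_coSmall]
    exact mk_image_le.trans_lt ((mk_preimage_of_injective _ _ inl_injective).trans_lt hB)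
  · rw [preimage_compl]
    exact compl_mem_atTop_of_mk_lt_cof (((mk_preimage_of_injective _ _ inr_injective).trans_lt
      hB).trans_le (h1.trans (le_cof_rightSide hreg)))

theorem psiNum_sumFilter (hκ : ℵ₀ ≤ κ) (hlam : ℵ₀ ≤ lam) (hreg : lam.ord.cof = lam)
    (h1 : κ ≤ lam) :
    psiNum (filterTop (sumFilter κ lam μ hκ)) none = lam := by
  have := nonempty_ord_toType (aleph0_pos.trans_le hlam).ne'
  refine psiNum_filterTop_none_eq ⟨range (Sum.elim (fun k => (inl '' {x | (ofLex x).1 = k})ᶜ)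
    fun b => (inr '' Iic b)ᶜ), ?_, ?_, ?_⟩ fun F hF hFc => ?_
  · rintro _ ⟨k | b, rfl⟩
    · refine mem_sup.2 ⟨mem_map.2 (mem_comap.2 ⟨{k}ᶜ, ?_, ?_⟩), mem_map.2 ?_⟩
      · simpa [compl_mem_coSmall] using one_lt_aleph0.trans_le hκ
      · rintro x hx ⟨y, hy, hyx⟩
        exact hx (inl_injective hyx ▸ hy)
      · simp
    · refine mem_sup.2 ⟨mem_map.2 ?_, mem_map.2 ?_⟩
      · simp
      · simpa [preimage_compl, inr_injective.preimage_image] using Ioi_mem_atTop b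
  · refine eq_empty_of_forall_notMem fun z hz => ?_
    rcases z with x | b
    · exact hz _ ⟨inl (ofLex x).1, rfl⟩ ⟨x, rfl, rfl⟩
    · exact hz _ ⟨inr b, rfl⟩ ⟨b, mem_Iic.2 le_rfl, rfl⟩
  · refine mk_range_le.trans ?_
    rw [mk_sum, lift_id, lift_id, mk_ord_toType, mk_rightSide hlam]
    exact (add_le_add_left h1 _).trans (add_eq_self hlam).le
  · have hinter : ⋂₀ ((inr ⁻¹' ·) '' F) ∈ atTop :=
      sInter_mem_atTop_of_mk_lt_cof (mk_image_le.trans_lt (hFc.trans_le (le_cof_rightSide hreg)))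
        (by rintro _ ⟨P, hP, rfl⟩; exact (mem_sup.1 (hF P hP)).2)
    obtain ⟨b, hb⟩ := Filter.nonempty_of_mem hinter
    exact ⟨inr b, fun P hP => hb _ ⟨P, hP, rfl⟩⟩

theorem ordTop_eq_filterTop_sumFilter (hκ : ℵ₀ ≤ κ) (hlam : ℵ₀ ≤ lam) (hμ : ℵ₀ ≤ μ)
    (hκreg : κ.ord.cof = κ) :
    ordTop (Z := MidSum (LeftSide κ μ) (RightSide lam)) inferInstance =
      filterTop (sumFilter κ lam μ hκ) := by
  have := nonempty_ord_toType (aleph0_pos.trans_le hκ).ne'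
  have := nonempty_ord_toType (aleph0_pos.trans_le hlam).ne'
  have := nonempty_ord_toType (aleph0_pos.trans_le hμ).ne'
  rw [sumFilter_eq_of_isRegular hκ hμ hκreg]
  exact MidSum.ordTop_eq_filterTop Int.hasCovers.lex_prod.lex_prod Int.hasCovers.lex_prod

end FilterSpaceExample

/-- For infinite cardinals `κ ≤ λ ≤ μ` with `λ` regular, there is a set `Z`
with `|Z| = μ` and a free filter `p` on `Z` with `Z_p` weakly orderable, `a(Z_p) = κ` and
`ψ(Z_p) = λ`. If moreover `κ` is regular, `Z_p` can be chosen orderable. -/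
theorem stmt9 (κ lam μ : Cardinal.{u})
    (hκ : Cardinal.aleph0 ≤ κ) (hlam : Cardinal.aleph0 ≤ lam) (hμ : Cardinal.aleph0 ≤ μ)
    (hreg : lam.ord.cof = lam) (h1 : κ ≤ lam) (h2 : lam ≤ μ) :
    (∃ (Z : Type u) (p : Filter Z), Cardinal.mk Z = μ ∧ IsFree p ∧
      WeaklyOrderable (filterTop p) ∧
      aNum (filterTop p) (none : Option Z) = κ ∧
      psiNum (filterTop p) (none : Option Z) = lam) ∧
    (κ.ord.cof = κ →
      ∃ (Z : Type u) (p : Filter Z), Cardinal.mk Z = μ ∧ IsFree p ∧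
        Orderable (filterTop p) ∧
        aNum (filterTop p) (none : Option Z) = κ ∧
        psiNum (filterTop p) (none : Option Z) = lam) := by
  open FilterSpaceExample in
  exact ⟨⟨_, _, mk_leftSide_sum_rightSide hκ hμ h1 h2, isFree_sumFilter hκ hlam,
      ⟨MidSum.instLinearOrder, MidSum.woBy_filterTop (sumFilter_le hκ)⟩,
      aNum_sumFilter hκ hμ hreg h1, psiNum_sumFilter hκ hlam hreg h1⟩,
    fun hκreg => ⟨_, _, mk_leftSide_sum_rightSide hκ hμ h1 h2, isFree_sumFilter hκ hlam,
      ⟨MidSum.instLinearOrder, ordTop_eq_filterTop_sumFilter hκ hlam hμ hκreg⟩,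
      aNum_sumFilter hκ hμ hreg h1, psiNum_sumFilter hκ hlam hreg h1⟩⟩
end
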